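/- arXiv:2201.00476 — 3 statements merged into one kernel-verified Lean document; each statement's English description precedes it below -/
import Mathlib

section
/- Let R = K[X_0,...,X_n] over an algebraically closed field K, let P_1,...,P_r,P be distinct points in P^n with P = (1,0,...,0), so its defining ideal is ℘ = (X_1,...,X_n). Set J = ℘_1^{m_1} ∩ ... ∩ ℘_r^{m_r} for positive integers m_1,...,m_r, and let a, b be positive integers. Then reg(R/(J+℘^a)) ≤ b if and only if X_0^{b-i}·M ∈ J + ℘^{i+1} for every monomial M of degree i in X_1,...,X_n and every i = 0,...,a-1. -/
open MvPolynomial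

noncomputable section

/-- The defining prime ideal of the point of projective space with homogeneous
coordinates `p`: the ideal generated by the linear forms vanishing at `p`. -/
def pointIdeal {K : Type} [Field K] {N : ℕ} (p : Fin N → K) :
    Ideal (MvPolynomial (Fin N) K) :=
  Ideal.span {f | f.IsHomogeneous 1 ∧ eval p f = 0}

/-- The ideal of the fat point scheme `m₁P₁ + ⋯ + m_sP_s`. -/
def fatIdeal {K : Type} [Field K] {N s : ℕ} (p : Fin s → Fin N → K) (m : Fin s → ℕ) :
    Ideal (MvPolynomial (Fin N) K) :=
  ⨅ i, pointIdeal (p i) ^ (m i)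

/-- `dim_K` of the degree-`t` graded piece of the ideal `I`. -/
def gradedDim (K : Type) [Field K] {N : ℕ} (I : Ideal (MvPolynomial (Fin N) K)) (t : ℕ) : ℕ :=
  Module.finrank K ↥(homogeneousSubmodule (Fin N) K t ⊓ I.restrictScalars K)

/-- The Hilbert function of `R/I` in degree `t`. -/
def hilbFn (K : Type) [Field K] {N : ℕ} (I : Ideal (MvPolynomial (Fin N) K)) (t : ℕ) : ℕ :=
  Module.finrank K ↥(homogeneousSubmodule (Fin N) K t) - gradedDim K I t

/-- The regularity index of `R/I` relative to the multiplicity `e`: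
the least `t` with `H_{R/I}(t) = e`. -/
def regIndex (K : Type) [Field K] {N : ℕ} (I : Ideal (MvPolynomial (Fin N) K)) (e : ℕ) : ℕ :=
  sInf {t | hilbFn K I t = e}

/-- The multiplicity `e(R/I) = ∑ C(mᵢ+n-1, n)` of a fat point scheme in `ℙⁿ`. -/
def fatMult (n : ℕ) {s : ℕ} (m : Fin s → ℕ) : ℕ :=
  ∑ i, (m i + n - 1).choose n

/-- The regularity index of the fat point scheme `m₁P₁ + ⋯ + m_sP_s` in `ℙⁿ`. -/
def regFat (K : Type) [Field K] {n s : ℕ} (p : Fin s → Fin (n + 1) → K) (m : Fin s → ℕ) : ℕ :=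
  regIndex K (fatIdeal p m) (fatMult n m)

/-- The coordinate vectors `p i` represent distinct points of projective space. -/
def ProjDistinct {K : Type} [Field K] {N s : ℕ} (p : Fin s → Fin N → K) : Prop :=
  (∀ i, p i ≠ 0) ∧ ∀ i j, i ≠ j → ∀ c : K, p i ≠ c • p j

/-- The points `p i`, `i ∈ Q`, lie on a `j`-dimensional linear subspace of `ℙⁿ`. -/
def OnLinearSubspace {K : Type} [Field K] {N s : ℕ} (p : Fin s → Fin N → K)
    (Q : Finset (Fin s)) (j : ℕ) : Prop :=
  ∃ W : Submodule K (Fin N → K), Module.finrank K ↥W ≤ j + 1 ∧ ∀ i ∈ Q, p i ∈ W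

open Classical in
/-- The Segre bound `T(Z) = max {T_j(Z) | j = 1,…,n}` for fat points in `ℙⁿ`. -/
def segreBound {K : Type} [Field K] (n : ℕ) {s : ℕ} (p : Fin s → Fin (n + 1) → K)
    (m : Fin s → ℕ) : ℕ :=
  (Finset.Icc 1 n).sup fun j =>
    Finset.univ.powerset.sup fun Q =>
      if Q.Nonempty ∧ OnLinearSubspace p Q j then (∑ i ∈ Q, m i + j - 2) / j else 0

/-- The standard coordinate point `(1,0,…,0)`. -/
def stdPt (K : Type) [Field K] (N : ℕ) : Fin N → K := fun j => if (j : ℕ) = 0 then 1 else 0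


/-!
Grade monomials by their degree in `X_1, …, X_n` (`tailDegree`): `℘ ^ k` is spanned by
the monomials of tail degree `≥ k`. Since `H_{R/I}(t) = 0` means `R_t ⊆ I`, and this
persists in higher degrees, `reg(R/I) ≤ b` says `R_b ⊆ I` once some `R_T ⊆ I` (otherwise
`sInf ∅ = 0` would make the left-hand side vacuous). Such a `T` exists for `I = J + ℘ ^ a`:
a linear form vanishing at `P_i` but not at `P` gives `X_0 ∈ ℘_i + ℘`, so `X_0 ^ (∑ mᵢ) ∈ J + ℘`.

The monomial condition is then necessary by degree reasons. Conversely, by descending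
induction on `k ≤ a` every degree-`b` monomial of tail degree `≥ k` lies in `J + ℘ ^ a`: one
of tail degree exactly `k` is `X_0 ^ (b - k) * M ∈ J + ℘ ^ (k + 1)`, and as both summands are
homogeneous ideals it is an element of `J` plus a degree-`b` element of `℘ ^ (k + 1)`,
covered by the induction.
-/

attribute [local instance] MvPolynomial.gradedAlgebra

section Graded

variable {ι σ A : Type*} [DecidableEq ι] [AddMonoid ι] [CommSemiring A] [SetLike σ A]
  [AddSubmonoidClass σ A] {𝒜 : ι → σ} [GradedRing 𝒜]

theorem Ideal.IsHomogeneous.pow {I : Ideal A} (hI : I.IsHomogeneous 𝒜) :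
    ∀ k : ℕ, (I ^ k).IsHomogeneous 𝒜
  | 0 => by rw [pow_zero, Ideal.one_eq_top]; exact Ideal.IsHomogeneous.top 𝒜
  | k + 1 => by rw [pow_succ]; exact (hI.pow k).mul hI

theorem Ideal.IsHomogeneous.exists_add_of_mem_sup {I J : Ideal A} (hI : I.IsHomogeneous 𝒜)
    (hJ : J.IsHomogeneous 𝒜) {i : ι} {x : A} (hx : x ∈ 𝒜 i) (hxIJ : x ∈ I ⊔ J) :
    ∃ u ∈ I, ∃ v ∈ J, v ∈ 𝒜 i ∧ x = u + v := by
  obtain ⟨u, hu, v, hv, rfl⟩ := Submodule.mem_sup.mp hxIJ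
  refine ⟨GradedRing.proj 𝒜 i u, hI i hu, GradedRing.proj 𝒜 i v, hJ i hv,
    SetLike.coe_mem _, ?_⟩
  rw [← map_add, GradedRing.proj_apply, DirectSum.decompose_of_mem_same 𝒜 hx]

end Graded

theorem Ideal.pow_sum_mem_iInf_pow_sup {R ι : Type*} [CommRing R] [Fintype ι] {I : ι → Ideal R}
    {P : Ideal R} {x : R} (hx : ∀ i, x ∈ I i ⊔ P) (m : ι → ℕ) :
    x ^ (∑ i, m i) ∈ (⨅ i, I i ^ m i) ⊔ P := by
  have mem_sup_iff {A : Ideal R} {y : R} :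
      y ∈ A ⊔ P ↔ Ideal.Quotient.mk P y ∈ A.map (Ideal.Quotient.mk P) := by
    rw [← Ideal.mem_comap, Ideal.comap_map_of_surjective _ Ideal.Quotient.mk_surjective,
      ← RingHom.ker_eq_comap_bot, Ideal.mk_ker]
  simp_rw [mem_sup_iff] at hx ⊢
  refine Ideal.map_mono (Ideal.prod_le_inf.trans (Finset.inf_univ_eq_iInf _).le) ?_
  rw [← Finset.prod_pow_eq_pow_sum, map_prod, ← Ideal.mapHom_apply, map_prod]
  exact Ideal.prod_mem_prod fun i _ => by
    rw [Ideal.mapHom_apply, Ideal.map_pow]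
    exact Ideal.pow_mem_pow (hx i) _

namespace MvPolynomial

variable {σ R : Type*} [CommSemiring R]

theorem mem_ideal_of_monomial_mem {I : Ideal (MvPolynomial σ R)} {f : MvPolynomial σ R}
    (h : ∀ d ∈ f.support, monomial d 1 ∈ I) : f ∈ I := by
  rw [f.as_sum]
  refine Ideal.sum_mem _ fun d hd => ?_
  rw [← mul_one (coeff d f), ← C_mul_monomial]
  exact Ideal.mul_mem_left _ _ (h d hd)

theorem monomial_eq_X_pow_mul {d : σ →₀ ℕ} {j : σ} {k : ℕ} (h : k ≤ d j) :
    monomial d (1 : R) = X j ^ k * monomial (d - Finsupp.single j k) 1 := by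
  rw [X_pow_eq_monomial, monomial_mul, one_mul,
    add_tsub_cancel_of_le (Finsupp.single_le_iff.mpr h)]

theorem homogeneousSubmodule_le_iff {I : Ideal (MvPolynomial σ R)} {t : ℕ} :
    homogeneousSubmodule σ R t ≤ I.restrictScalars R ↔
      ∀ d : σ →₀ ℕ, d.degree = t → monomial d 1 ∈ I := by
  refine ⟨fun h d hd => h (isHomogeneous_monomial 1 hd), fun h f hf => ?_⟩
  refine mem_ideal_of_monomial_mem fun d hd => h d ?_
  rw [Finsupp.degree_eq_weight_one]
  exact hf (mem_support_iff.mp hd)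

theorem homogeneousSubmodule_succ_le {I : Ideal (MvPolynomial σ R)} {t : ℕ}
    (h : homogeneousSubmodule σ R t ≤ I.restrictScalars R) :
    homogeneousSubmodule σ R (t + 1) ≤ I.restrictScalars R := by
  rw [homogeneousSubmodule_le_iff] at h ⊢
  intro d hd
  obtain ⟨j, hj⟩ : ∃ j, d j ≠ 0 := by
    by_contra! h0
    simp [show d = 0 from Finsupp.ext h0] at hd
  rw [monomial_eq_X_pow_mul (Nat.one_le_iff_ne_zero.mpr hj)]
  refine Ideal.mul_mem_left _ _ (h _ ?_)
  have := congrArg Finsupp.degree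
    (tsub_add_cancel_of_le (Finsupp.single_le_iff.mpr (Nat.one_le_iff_ne_zero.mpr hj)))
  rw [map_add, Finsupp.degree_single] at this
  omega

theorem homogeneousSubmodule_le_of_le {I : Ideal (MvPolynomial σ R)} {t t' : ℕ} (htt' : t ≤ t')
    (h : homogeneousSubmodule σ R t ≤ I.restrictScalars R) :
    homogeneousSubmodule σ R t' ≤ I.restrictScalars R := by
  induction t', htt' using Nat.le_induction with
  | base => exact h
  | succ t' _ ih => exact homogeneousSubmodule_succ_le ih

end MvPolynomial

section HilbertFunction

variable {K : Type} [Field K] {N : ℕ}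

theorem hilbFn_eq_zero_iff {I : Ideal (MvPolynomial (Fin N) K)} {t : ℕ} :
    hilbFn K I t = 0 ↔ homogeneousSubmodule (Fin N) K t ≤ I.restrictScalars K := by
  have : FiniteDimensional K (homogeneousSubmodule (Fin N) K t) :=
    Module.Finite.iff_fg.mpr (homogeneousSubmodule_fg _ _ t)
  rw [hilbFn, gradedDim, Nat.sub_eq_zero_iff_le]
  exact ⟨fun h => inf_eq_left.mp (Submodule.eq_of_le_of_finrank_le inf_le_left h),
    fun h => Submodule.finrank_mono (le_inf le_rfl h)⟩

theorem regIndex_zero_le_iff {I : Ideal (MvPolynomial (Fin N) K)}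
    (hI : ∃ T, homogeneousSubmodule (Fin N) K T ≤ I.restrictScalars K) {b : ℕ} :
    regIndex K I 0 ≤ b ↔ homogeneousSubmodule (Fin N) K b ≤ I.restrictScalars K := by
  simp_rw [← hilbFn_eq_zero_iff] at hI
  refine ⟨fun h => ?_, fun h => Nat.sInf_le (hilbFn_eq_zero_iff.mpr h)⟩
  exact homogeneousSubmodule_le_of_le h (hilbFn_eq_zero_iff.mp (Nat.sInf_mem hI))

end HilbertFunction

theorem pointIdeal_isHomogeneous {K : Type} [Field K] {N : ℕ} (q : Fin N → K) :
    (pointIdeal q).IsHomogeneous (homogeneousSubmodule (Fin N) K) :=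
  Ideal.homogeneous_span _ _ fun _ hf => ⟨1, hf.1⟩

theorem fatIdeal_isHomogeneous {K : Type} [Field K] {N s : ℕ} (p : Fin s → Fin N → K)
    (m : Fin s → ℕ) : (fatIdeal p m).IsHomogeneous (homogeneousSubmodule (Fin N) K) :=
  Ideal.IsHomogeneous.iInf fun i => (pointIdeal_isHomogeneous (p i)).pow (m i)

section StandardPoint

variable {K : Type} [Field K] {n : ℕ}

def tailDegree (d : Fin (n + 1) →₀ ℕ) : ℕ := ∑ j : Fin n, d j.succ

theorem degree_eq_add_tailDegree (d : Fin (n + 1) →₀ ℕ) : d.degree = d 0 + tailDegree d := by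
  rw [Finsupp.degree_eq_sum, Fin.sum_univ_succ, tailDegree]

theorem tailDegree_add (d e : Fin (n + 1) →₀ ℕ) :
    tailDegree (d + e) = tailDegree d + tailDegree e := by
  simp [tailDegree, Finset.sum_add_distrib]

theorem X_succ_mem_pointIdeal_stdPt (j : Fin n) : X j.succ ∈ pointIdeal (stdPt K (n + 1)) :=
  Ideal.subset_span ⟨isHomogeneous_X K _, by simp [stdPt]⟩

theorem pointIdeal_stdPt :
    pointIdeal (stdPt K (n + 1)) = Ideal.span (X '' Set.range Fin.succ) := by
  refine le_antisymm (Ideal.span_le.mpr ?_) (Ideal.span_le.mpr ?_)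
  · rintro f ⟨hf, hf0⟩
    rw [← mem_homogeneousSubmodule, homogeneousSubmodule_one_eq_span_X,
      Submodule.mem_span_range_iff_exists_fun] at hf
    obtain ⟨c, rfl⟩ := hf
    have hc0 : c 0 = 0 := by simpa [stdPt, Fin.sum_univ_succ] using hf0
    rw [SetLike.mem_coe, Fin.sum_univ_succ, hc0, zero_smul, zero_add]
    refine Ideal.sum_mem _ fun j _ => ?_
    rw [smul_eq_C_mul]
    exact Ideal.mul_mem_left _ _ (Ideal.subset_span ⟨j.succ, ⟨j, rfl⟩, rfl⟩)
  · rintro _ ⟨_, ⟨j, rfl⟩, rfl⟩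
    exact X_succ_mem_pointIdeal_stdPt j

theorem one_le_tailDegree_of_mem_pointIdeal_stdPt {f : MvPolynomial (Fin (n + 1)) K}
    (hf : f ∈ pointIdeal (stdPt K (n + 1))) {d : Fin (n + 1) →₀ ℕ} (hd : d ∈ f.support) :
    1 ≤ tailDegree d := by
  rw [pointIdeal_stdPt, mem_ideal_span_X_image] at hf
  obtain ⟨_, ⟨j, rfl⟩, hj⟩ := hf d hd
  exact (Nat.one_le_iff_ne_zero.mpr hj).trans
    (Finset.single_le_sum (f := fun j : Fin n => d j.succ) (fun _ _ => Nat.zero_le _)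
      (Finset.mem_univ j))

theorem le_tailDegree_of_mem_pow_pointIdeal_stdPt {k : ℕ} {f : MvPolynomial (Fin (n + 1)) K}
    (hf : f ∈ pointIdeal (stdPt K (n + 1)) ^ k) : ∀ d ∈ f.support, k ≤ tailDegree d := by
  induction k generalizing f with
  | zero => simp
  | succ k ih =>
    rw [pow_succ] at hf
    refine Submodule.mul_induction_on (C := fun f => ∀ d ∈ f.support, k + 1 ≤ tailDegree d) hf
      (fun g hg h hh d hd => ?_) (fun g h hg hh d hd => ?_)
    · obtain ⟨u, hu, v, hv, rfl⟩ := Finset.mem_add.mp (support_mul g h hd)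
      rw [tailDegree_add]
      exact add_le_add (ih hg u hu) (one_le_tailDegree_of_mem_pointIdeal_stdPt hh hv)
    · rcases Finset.mem_union.mp (support_add hd) with hd | hd
      exacts [hg d hd, hh d hd]

theorem monomial_mem_pow_pointIdeal_stdPt {k : ℕ} {d : Fin (n + 1) →₀ ℕ} (h : k ≤ tailDegree d)
    (c : K) : monomial d c ∈ pointIdeal (stdPt K (n + 1)) ^ k := by
  rw [monomial_eq, Finsupp.prod_fintype _ _ fun _ => pow_zero _, Fin.prod_univ_succ, ← mul_assoc]
  refine Ideal.mul_mem_left _ _ (Ideal.pow_le_pow_right h ?_)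
  rw [tailDegree, ← Finset.prod_pow_eq_pow_sum]
  exact Ideal.prod_mem_prod fun j _ =>
    Ideal.pow_mem_pow (X_succ_mem_pointIdeal_stdPt (K := K) j) _

end StandardPoint

section FatPoints

variable {K : Type} [Field K] {n : ℕ}

theorem exists_succ_ne_zero_of_ne_smul_stdPt {q : Fin (n + 1) → K}
    (hq : ∀ c : K, q ≠ c • stdPt K (n + 1)) : ∃ j : Fin n, q j.succ ≠ 0 := by
  by_contra! h
  refine hq (q 0) (funext fun j => ?_)
  cases j using Fin.cases <;> simp [stdPt, h]

theorem X_zero_mem_pointIdeal_sup_pointIdeal_stdPt {q : Fin (n + 1) → K} {j : Fin n}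
    (hq : q j.succ ≠ 0) : X 0 ∈ pointIdeal q ⊔ pointIdeal (stdPt K (n + 1)) := by
  have hL : X 0 - C (q 0 / q j.succ) * X j.succ ∈ pointIdeal q :=
    Ideal.subset_span ⟨(isHomogeneous_X K 0).sub ((isHomogeneous_X K _).C_mul _), by simp [hq]⟩
  rw [← sub_add_cancel (X 0) (C (q 0 / q j.succ) * X j.succ)]
  exact Submodule.add_mem_sup hL (Ideal.mul_mem_left _ _ (X_succ_mem_pointIdeal_stdPt j))

theorem exists_homogeneousSubmodule_le_fatIdeal_sup {r : ℕ} {p : Fin r → Fin (n + 1) → K}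
    (hp : ∀ i, ∃ j : Fin n, p i j.succ ≠ 0) (m : Fin r → ℕ) (a : ℕ) :
    ∃ T, homogeneousSubmodule (Fin (n + 1)) K T ≤
      (fatIdeal p m ⊔ pointIdeal (stdPt K (n + 1)) ^ a).restrictScalars K := by
  set N := ∑ i, m i
  have hN : X 0 ^ N ∈ fatIdeal p m ⊔ pointIdeal (stdPt K (n + 1)) :=
    Ideal.pow_sum_mem_iInf_pow_sup
      (fun i => (hp i).elim fun _ hj => X_zero_mem_pointIdeal_sup_pointIdeal_stdPt hj) m
  have hNa : X 0 ^ (N * (1 + a)) ∈ fatIdeal p m ⊔ pointIdeal (stdPt K (n + 1)) ^ a := by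
    rw [pow_mul]
    simpa using Ideal.sup_pow_add_le_pow_sup_pow (Ideal.pow_mem_pow hN (1 + a))
  refine ⟨N * (1 + a) + a, homogeneousSubmodule_le_iff.mpr fun d hd => ?_⟩
  rw [degree_eq_add_tailDegree] at hd
  by_cases ha : a ≤ tailDegree d
  · exact Ideal.mem_sup_right (monomial_mem_pow_pointIdeal_stdPt ha 1)
  · rw [monomial_eq_X_pow_mul (show N * (1 + a) ≤ d 0 by omega)]
    exact Ideal.mul_mem_right _ _ hNa

variable {J : Ideal (MvPolynomial (Fin (n + 1)) K)}

theorem monomial_mem_sup_pow_of_tailDegree_eq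
    (hJ : J.IsHomogeneous (homogeneousSubmodule (Fin (n + 1)) K)) {a b k : ℕ}
    (hX : ∀ d : Fin (n + 1) →₀ ℕ, d 0 = 0 → (∑ j, d j) = k →
      X (0 : Fin (n + 1)) ^ (b - k) * monomial d (1 : K) ∈
        J ⊔ pointIdeal (stdPt K (n + 1)) ^ (k + 1))
    (ih : ∀ d : Fin (n + 1) →₀ ℕ, d.degree = b → k + 1 ≤ tailDegree d →
      monomial d (1 : K) ∈ J ⊔ pointIdeal (stdPt K (n + 1)) ^ a)
    {d : Fin (n + 1) →₀ ℕ} (hd : d.degree = b) (hdk : tailDegree d = k) :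
    monomial d (1 : K) ∈ J ⊔ pointIdeal (stdPt K (n + 1)) ^ a := by
  set d' := d - Finsupp.single 0 (d 0)
  have hsplit : monomial d (1 : K) = X 0 ^ (b - k) * monomial d' 1 := by
    rw [degree_eq_add_tailDegree] at hd
    rw [show b - k = d 0 by omega]
    exact monomial_eq_X_pow_mul le_rfl
  have hd' : (∑ j, d' j) = k := by
    simp [d', ← hdk, Fin.sum_univ_succ, tailDegree, Finsupp.single_apply,
      (Fin.succ_ne_zero _).symm]
  have hmem := hX d' (by simp [d']) hd'
  rw [← hsplit] at hmem
  obtain ⟨u, hu, v, hv, hvb, huv⟩ := hJ.exists_add_of_mem_sup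
    ((pointIdeal_isHomogeneous _).pow (k + 1)) (isHomogeneous_monomial 1 hd) hmem
  rw [huv]
  refine Submodule.add_mem _ (Ideal.mem_sup_left hu) (mem_ideal_of_monomial_mem fun e he => ?_)
  refine ih e ?_ (le_tailDegree_of_mem_pow_pointIdeal_stdPt hv e he)
  rw [Finsupp.degree_eq_weight_one]
  exact hvb (mem_support_iff.mp he)

theorem homogeneousSubmodule_le_sup_pow_iff
    (hJ : J.IsHomogeneous (homogeneousSubmodule (Fin (n + 1)) K)) {a b : ℕ} :
    homogeneousSubmodule (Fin (n + 1)) K b ≤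
        (J ⊔ pointIdeal (stdPt K (n + 1)) ^ a).restrictScalars K ↔
      ∀ i < a, ∀ d : Fin (n + 1) →₀ ℕ, d 0 = 0 → (∑ j, d j) = i →
        X (0 : Fin (n + 1)) ^ (b - i) * monomial d (1 : K) ∈
          J ⊔ pointIdeal (stdPt K (n + 1)) ^ (i + 1) := by
  constructor
  · intro h i hi d _ hd
    have hx : (X 0 ^ (b - i) * monomial d (1 : K)).IsHomogeneous (b - i + i) :=
      (isHomogeneous_X_pow _ _).mul
        (isHomogeneous_monomial _ (by rw [Finsupp.degree_eq_sum, hd]))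
    exact sup_le_sup_left (Ideal.pow_le_pow_right hi) J
      (homogeneousSubmodule_le_of_le (by omega) h hx)
  · intro H
    rw [homogeneousSubmodule_le_iff]
    intro d hd
    refine Nat.decreasingInduction (motive := fun k _ => ∀ d : Fin (n + 1) →₀ ℕ, d.degree = b →
        k ≤ tailDegree d → monomial d (1 : K) ∈ J ⊔ pointIdeal (stdPt K (n + 1)) ^ a)
      (fun k hk ih d hd hdk => ?_) (fun d _ hda => ?_) (Nat.zero_le a) d hd (Nat.zero_le _)
    · rcases hdk.lt_or_eq with hdk | hdk
      · exact ih d hd hdk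
      · exact monomial_mem_sup_pow_of_tailDegree_eq hJ (H k hk) ih hd hdk.symm
    · exact Ideal.mem_sup_right (monomial_mem_pow_pointIdeal_stdPt hda 1)

end FatPoints

theorem stmt1_general {K : Type} [Field K] {n r : ℕ}
    (p : Fin r → Fin (n + 1) → K)
    (hdist : ProjDistinct (Fin.snoc p (stdPt K (n + 1))))
    (m : Fin r → ℕ) (a b : ℕ)
    (J : Ideal (MvPolynomial (Fin (n + 1)) K)) (hJ : J = fatIdeal p m) :
    regIndex K (J ⊔ pointIdeal (stdPt K (n + 1)) ^ a) 0 ≤ b ↔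
      ∀ i < a, ∀ d : Fin (n + 1) →₀ ℕ, d 0 = 0 → (∑ j, d j) = i →
        X (0 : Fin (n + 1)) ^ (b - i) * monomial d (1 : K) ∈
          J ⊔ pointIdeal (stdPt K (n + 1)) ^ (i + 1) := by
  subst hJ
  have hp (i : Fin r) : ∃ j : Fin n, p i j.succ ≠ 0 :=
    exists_succ_ne_zero_of_ne_smul_stdPt fun c => by
      simpa using hdist.2 i.castSucc (Fin.last r) (Fin.castSucc_lt_last i).ne c
  rw [regIndex_zero_le_iff (exists_homogeneousSubmodule_le_fatIdeal_sup hp m a)]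
  exact homogeneousSubmodule_le_sup_pow_iff (fatIdeal_isHomogeneous p m)

/-- Lemma 2.2 (CTV): monomial criterion for `reg(R/(J+℘^a)) ≤ b` when `P = (1,0,…,0)`. -/
theorem stmt1 {K : Type} [Field K] [IsAlgClosed K] {n r : ℕ}
    (p : Fin r → Fin (n + 1) → K)
    (hdist : ProjDistinct (Fin.snoc p (stdPt K (n + 1))))
    (m : Fin r → ℕ) (hm : ∀ i, 0 < m i) (a b : ℕ) (ha : 0 < a) (hb : 0 < b)
    (J : Ideal (MvPolynomial (Fin (n + 1)) K)) (hJ : J = fatIdeal p m) :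
    regIndex K (J ⊔ pointIdeal (stdPt K (n + 1)) ^ a) 0 ≤ b ↔
      ∀ i < a, ∀ d : Fin (n + 1) →₀ ℕ, d 0 = 0 → (∑ j, d j) = i →
        X (0 : Fin (n + 1)) ^ (b - i) * monomial d (1 : K) ∈
          J ⊔ pointIdeal (stdPt K (n + 1)) ^ (i + 1) :=
  stmt1_general p hdist m a b J hJ
end
end

section
/- Let R = K[X_0,X_1,X_2], let l_1, l_2 be two distinct lines in P^2, let P_1,P_2,P_3 ∈ l_1 \ l_2, P_4,P_5 ∈ l_2 \ l_1 be distinct points, and let P_6 = (1,0,0) with ℘_6 = (X_1,X_2), P_6 ∉ l_1 ∪ l_2. Set J = ℘_1^m ∩ ... ∩ ℘_5^m for a positive integer m. Then reg(R/(J + ℘_6^m)) ≤ 3m - 1. -/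
/-!
Take linear forms `ℓ₁, ℓ₂` cutting out the two lines, normalized to `1` at `P₆`, so that
`ℓₖ = X₀ + uₖ` with `uₖ ∈ ℘₆`; then `ℓ₁^m ℓ₂^m ∈ J`. Writing `X₀ = ℓₖ - uₖ` trades one factor
`X₀` for one more factor from `℘₆`, and `℘₆^m` is already in the ideal, so a downward induction on
`i` gives `X₀^(3m-1-i) ℘₆^i ⊆ J + ℘₆^m` for `i < m`. Hence every monomial of degree `3m - 1` lies
in `J + ℘₆^m` and the Hilbert function of the quotient vanishes in that degree.
-/
open MvPolynomial

noncomputable section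

namespace Ideal

variable {A : Type*} [CommRing A] {P I : Ideal A} {m : ℕ} {x u : A}

theorem pow_mul_mem_of_add_mul_mem (hu : u ∈ P) (hPI : P ^ m ≤ I) {n : ℕ} {z : A}
    (h : ∀ i < m, ∀ g ∈ P ^ i, x ^ (n + (m - 1 - i)) * ((x + u) * z) * g ∈ I) :
    ∀ i < m, ∀ g ∈ P ^ i, x ^ (n + 1 + (m - 1 - i)) * z * g ∈ I := by
  have split (e : ℕ) (g : A) :
      x ^ (e + 1) * z * g = x ^ e * ((x + u) * z) * g - x ^ e * z * (u * g) := by ring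
  suffices ∀ k i, i + k + 1 = m → ∀ g ∈ P ^ i, x ^ (n + 1 + k) * z * g ∈ I from
    fun i hi g hg ↦ this (m - 1 - i) i (by omega) g hg
  intro k
  induction k with
  | zero =>
    intro i hi g hg
    rw [add_zero, split]
    refine sub_mem (by simpa [← hi] using h i (by omega) g hg) (mul_mem_left _ _ (hPI ?_))
    simpa [← hi, pow_succ'] using mul_mem_mul hu hg
  | succ k ih =>
    intro i hi g hg
    rw [show n + 1 + (k + 1) = n + (k + 1) + 1 by ring, split]
    refine sub_mem (by simpa [show m - 1 - i = k + 1 by omega] using h i (by omega) g hg) ?_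
    have hug : u * g ∈ P ^ (i + 1) := by simpa [pow_succ'] using mul_mem_mul hu hg
    simpa [add_assoc, add_comm 1 k] using ih (i + 1) (by omega) (u * g) hug

theorem pow_mul_mem_of_add_pow_mul_mem (hu : u ∈ P) (hPI : P ^ m ≤ I) (a : ℕ) :
    ∀ {n : ℕ} {z : A},
      (∀ i < m, ∀ g ∈ P ^ i, x ^ (n + (m - 1 - i)) * ((x + u) ^ a * z) * g ∈ I) →
      ∀ i < m, ∀ g ∈ P ^ i, x ^ (n + a + (m - 1 - i)) * z * g ∈ I := by
  induction a with
  | zero => simp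
  | succ a ih =>
    intro n z h
    rw [← add_assoc]
    refine pow_mul_mem_of_add_mul_mem hu hPI (ih ?_)
    simpa [pow_succ, mul_assoc] using h

theorem pow_mul_mem_of_add_pow_mul_add_pow_mem {u₁ u₂ : A} (hu₁ : u₁ ∈ P) (hu₂ : u₂ ∈ P)
    (hPI : P ^ m ≤ I) {a b : ℕ} (h : (x + u₁) ^ a * (x + u₂) ^ b ∈ I) :
    ∀ i < m, ∀ g ∈ P ^ i, x ^ (a + b + (m - 1 - i)) * g ∈ I := by
  have h₂ := pow_mul_mem_of_add_pow_mul_mem (n := 0) (z := (x + u₁) ^ a) hu₂ hPI b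
    fun i _ g _ ↦ mul_mem_right _ _ (mul_mem_left _ _ (by rwa [mul_comm]))
  have h₁ := pow_mul_mem_of_add_pow_mul_mem (z := 1) hu₁ hPI a (by simpa using h₂)
  simpa [add_comm a b] using h₁

end Ideal

theorem exists_linearForm_eval_eq_one {K σ : Type*} [Field K] [Fintype σ] [DecidableEq σ]
    {W : Submodule K (σ → K)} {v : σ → K} (hv : v ∉ W) :
    ∃ ℓ : MvPolynomial σ K, ℓ.IsHomogeneous 1 ∧ (∀ w ∈ W, eval w ℓ = 0) ∧ eval v ℓ = 1 := by
  obtain ⟨f, hfv, hfW⟩ := W.exists_dual_map_eq_bot_of_notMem hv inferInstance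
  let g : (σ → K) →ₗ[K] Unit → K := LinearMap.pi fun _ ↦ (f v)⁻¹ • f
  have eval_eq (c : σ → K) :
      eval c ((LinearMap.toMatrix' g).toMvPolynomial ()) = (f v)⁻¹ * f c := by
    simp [Matrix.toMvPolynomial_eval_eq_apply, g]
  refine ⟨(LinearMap.toMatrix' g).toMvPolynomial (), Matrix.toMvPolynomial_isHomogeneous _ _,
    fun w hw ↦ ?_, by rw [eval_eq, inv_mul_cancel₀ hfv]⟩
  have hfw : f w ∈ W.map f := Submodule.mem_map_of_mem hw
  rw [hfW, Submodule.mem_bot] at hfw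
  rw [eval_eq, hfw, mul_zero]

theorem mem_pointIdeal_of_eval_eq_zero {K : Type} [Field K] {N : ℕ} {q : Fin N → K}
    {ℓ : MvPolynomial (Fin N) K} (hℓ : ℓ.IsHomogeneous 1) (h : eval q ℓ = 0) :
    ℓ ∈ pointIdeal q :=
  Ideal.subset_span ⟨hℓ, h⟩

theorem X_mem_pointIdeal_stdPt {K : Type} [Field K] {n : ℕ} {j : Fin (n + 1)} (hj : j ≠ 0) :
    X j ∈ pointIdeal (stdPt K (n + 1)) :=
  mem_pointIdeal_of_eval_eq_zero (isHomogeneous_X K j) (by simp [stdPt, hj])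

theorem sub_X_zero_mem_pointIdeal_stdPt {K : Type} [Field K] {n : ℕ}
    {ℓ : MvPolynomial (Fin (n + 1)) K} (hℓ : ℓ.IsHomogeneous 1)
    (h : eval (stdPt K (n + 1)) ℓ = 1) :
    ℓ - X 0 ∈ pointIdeal (stdPt K (n + 1)) :=
  mem_pointIdeal_of_eval_eq_zero (hℓ.sub (isHomogeneous_X K 0)) (by simp [h, stdPt])

theorem monomial_one_mem_pow_degree {σ R : Type*} [CommSemiring R] {P : Ideal (MvPolynomial σ R)}
    {t : σ →₀ ℕ} (h : ∀ j ∈ t.support, X j ∈ P) : monomial t 1 ∈ P ^ t.degree := by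
  rw [monomial_eq, C_1, one_mul, Finsupp.degree_apply, ← Finset.prod_pow_eq_pow_sum]
  exact Ideal.prod_mem_prod fun j hj ↦ Ideal.pow_mem_pow (h j hj) _

theorem monomial_mem_of_X_zero_pow_mul_mem {K : Type} [Field K] {n m d : ℕ}
    {I : Ideal (MvPolynomial (Fin (n + 1)) K)} (hPI : pointIdeal (stdPt K (n + 1)) ^ m ≤ I)
    (h : ∀ i < m, ∀ g ∈ pointIdeal (stdPt K (n + 1)) ^ i, X 0 ^ (d - i) * g ∈ I)
    {s : Fin (n + 1) →₀ ℕ} (hs : s.degree = d) : monomial s 1 ∈ I := by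
  set t := s.erase 0
  have hts : s.degree = s 0 + t.degree := by
    rw [← Finsupp.single_add_erase 0 s, map_add, Finsupp.degree_single]; simp [t]
  have hmono : (monomial s 1 : MvPolynomial (Fin (n + 1)) K) = X 0 ^ s 0 * monomial t 1 := by
    rw [X_pow_eq_monomial, monomial_mul, one_mul, Finsupp.single_add_erase]
  have ht : monomial t 1 ∈ pointIdeal (stdPt K (n + 1)) ^ t.degree :=
    monomial_one_mem_pow_degree fun j hj ↦ X_mem_pointIdeal_stdPt (by
      rw [Finsupp.support_erase] at hj; exact Finset.ne_of_mem_erase hj)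
  rw [hmono]
  rcases lt_or_ge t.degree m with hlt | hge
  · simpa [show d - t.degree = s 0 by omega] using h _ hlt _ ht
  · exact Ideal.mul_mem_left _ _ (hPI (Ideal.pow_le_pow_right hge ht))

theorem homogeneousSubmodule_le_of_monomial_mem {σ R : Type*} [CommSemiring R]
    {I : Ideal (MvPolynomial σ R)} {d : ℕ} (h : ∀ s : σ →₀ ℕ, s.degree = d → monomial s 1 ∈ I) :
    homogeneousSubmodule σ R d ≤ I.restrictScalars R := by
  rw [homogeneousSubmodule_eq_finsupp_supported, AddMonoidAlgebra.supported_eq_span_single,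
    Submodule.span_le]
  rintro _ ⟨s, hs, rfl⟩
  exact h s hs

theorem regIndex_le_of_homogeneousSubmodule_le {K : Type} [Field K] {N t : ℕ}
    {I : Ideal (MvPolynomial (Fin N) K)}
    (h : homogeneousSubmodule (Fin N) K t ≤ I.restrictScalars K) :
    regIndex K I 0 ≤ t :=
  Nat.sInf_le (by rw [Set.mem_ofPred_eq, hilbFn, gradedDim, inf_eq_left.mpr h, Nat.sub_self])

theorem stmt14_general {K : Type} [Field K]
    (W₁ W₂ : Submodule K (Fin 3 → K))
    (p : Fin 5 → Fin 3 → K)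
    (h123 : ∀ i : Fin 5, (i : ℕ) < 3 → p i ∈ W₁ ∧ p i ∉ W₂)
    (h45 : ∀ i : Fin 5, (i : ℕ) = 3 ∨ (i : ℕ) = 4 → p i ∈ W₂ ∧ p i ∉ W₁)
    (h6 : stdPt K 3 ∉ W₁ ∧ stdPt K 3 ∉ W₂)
    (m : ℕ) :
    regIndex K (fatIdeal p (fun _ => m) ⊔ pointIdeal (stdPt K 3) ^ m) 0 ≤ 3 * m - 1 := by
  obtain ⟨ℓ₁, hℓ₁, hW₁, hP₁⟩ := exists_linearForm_eval_eq_one h6.1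
  obtain ⟨ℓ₂, hℓ₂, hW₂, hP₂⟩ := exists_linearForm_eval_eq_one h6.2
  have hfat : ℓ₁ ^ m * ℓ₂ ^ m ∈ fatIdeal p (fun _ => m) := by
    refine Ideal.mem_iInf.mpr fun i ↦ ?_
    by_cases hi : (i : ℕ) < 3
    · exact Ideal.mul_mem_right _ _
        (Ideal.pow_mem_pow (mem_pointIdeal_of_eval_eq_zero hℓ₁ (hW₁ _ (h123 i hi).1)) m)
    · exact Ideal.mul_mem_left _ _
        (Ideal.pow_mem_pow (mem_pointIdeal_of_eval_eq_zero hℓ₂ (hW₂ _ (h45 i (by omega)).1)) m)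
  have key := Ideal.pow_mul_mem_of_add_pow_mul_add_pow_mem (x := X 0)
    (I := fatIdeal p (fun _ => m) ⊔ pointIdeal (stdPt K 3) ^ m)
    (sub_X_zero_mem_pointIdeal_stdPt hℓ₁ hP₁) (sub_X_zero_mem_pointIdeal_stdPt hℓ₂ hP₂)
    le_sup_right (by simpa using Ideal.mem_sup_left hfat)
  refine regIndex_le_of_homogeneousSubmodule_le
    (homogeneousSubmodule_le_of_monomial_mem fun s hs ↦ ?_)
  refine monomial_mem_of_X_zero_pow_mul_mem le_sup_right (fun i hi g hg ↦ ?_) hs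
  simpa [show 3 * m - 1 - i = m + m + (m - 1 - i) by omega] using key i hi g hg

/-- The computation in Example 4.4: `reg(R/(J + ℘₆^m)) ≤ 3m - 1` for the six-point
configuration in `ℙ²` with `P₆ = (1,0,0)`. -/
theorem stmt14 {K : Type} [Field K] [IsAlgClosed K]
    (W₁ W₂ : Submodule K (Fin 3 → K))
    (h1 : Module.finrank K ↥W₁ = 2) (h2 : Module.finrank K ↥W₂ = 2) (hW : W₁ ≠ W₂)
    (p : Fin 5 → Fin 3 → K) (hdist : ProjDistinct (Fin.snoc p (stdPt K 3)))
    (h123 : ∀ i : Fin 5, (i : ℕ) < 3 → p i ∈ W₁ ∧ p i ∉ W₂)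
    (h45 : ∀ i : Fin 5, (i : ℕ) = 3 ∨ (i : ℕ) = 4 → p i ∈ W₂ ∧ p i ∉ W₁)
    (h6 : stdPt K 3 ∉ W₁ ∧ stdPt K 3 ∉ W₂)
    (m : ℕ) (hm : 0 < m) :
    regIndex K (fatIdeal p (fun _ => m) ⊔ pointIdeal (stdPt K 3) ^ m) 0 ≤ 3 * m - 1 :=
  stmt14_general W₁ W₂ p h123 h45 h6 m
end
end

section
/- Let Z = 2P_1 + ... + 2P_6 be six non-degenerate double points in P^3 such that no 3 of the points are collinear and no 4 lie on a plane (equivalently T(Z) = T_3(Z) = 4 > T_j(Z) for j = 1,2). Then the points are in linearly general position in P^3 and reg(Z) = 4. -/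
open MvPolynomial

noncomputable section

/-!
A double point imposes at most `N` conditions on forms of each degree `d + 1` in `N` variables:
in linear coordinates `ℓ₀, …` with only `ℓ₀` not vanishing at the point, every product of
`d + 1` of them lies in `℘²` except `ℓ₀^d ℓⱼ`. So the quartics through the six double points in
`ℙ³` form a space of dimension at least `35 - 24 = 11`. Conversely, when no four points are
coplanar, products of four planes through triples of the points give, for each point, four
quartics singular at the other five whose value and derivatives there form a triangular system
with nonzero diagonal; hence the 24 conditions are independent, the dimension is exactly `11`, and
the Hilbert function equals the multiplicity `24` in degree `4`. Below degree `4` there are at most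
`20` forms.
-/

section LinearAlgebra

open Module

variable {K V : Type*} [Field K] [AddCommGroup V] [Module K V]

theorem Submodule.finrank_le_finrank_inf_biInf_add {ι : Type*} (U : Submodule K V)
    [FiniteDimensional K U] (W : ι → Submodule K V) (c : ℕ) (s : Finset ι)
    (hW : ∀ i ∈ s, finrank K U ≤ finrank K ↥(U ⊓ W i) + c) :
    finrank K U ≤ finrank K ↥(U ⊓ ⨅ i ∈ s, W i) + s.card * c := by
  classical
  induction s using Finset.induction_on with
  | empty =>
    rw [show (⨅ i ∈ (∅ : Finset ι), W i) = ⊤ by simp, inf_top_eq]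
    simp
  | insert a s ha ih =>
    have hsplit : U ⊓ ⨅ i ∈ insert a s, W i = U ⊓ W a ⊓ (U ⊓ ⨅ i ∈ s, W i) := by
      rw [Finset.iInf_insert, inf_inf_distrib_left]
    have hsup : finrank K ↥(U ⊓ W a ⊔ U ⊓ ⨅ i ∈ s, W i) ≤ finrank K U :=
      Submodule.finrank_mono (sup_le inf_le_left inf_le_left)
    have := Submodule.finrank_sup_add_finrank_inf_eq (U ⊓ W a) (U ⊓ ⨅ i ∈ s, W i)
    have := hW a (Finset.mem_insert_self a s)
    have := ih fun i hi => hW i (Finset.mem_insert_of_mem hi)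
    rw [hsplit, Finset.card_insert_of_notMem ha]
    nlinarith

theorem eq_zero_of_forall_apply_sum_smul_eq_zero {ι : Type*} [Fintype ι] [PartialOrder ι]
    (φ : ι → V →ₗ[K] K) (v : ι → V) (htri : ∀ a b, ¬ b ≤ a → φ a (v b) = 0)
    (hdiag : ∀ a, φ a (v a) ≠ 0) {g : ι → K} (hg : ∀ a, φ a (∑ b, g b • v b) = 0) : g = 0 := by
  suffices ∀ a, g a = 0 from funext this
  intro a
  induction a using WellFoundedLT.induction with
  | ind a ih =>
    have hsum := hg a
    simp only [map_sum, map_smul, smul_eq_mul] at hsum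
    rw [Finset.sum_eq_single a (fun b _ hba => ?_) (by simp)] at hsum
    · exact (mul_eq_zero.mp hsum).resolve_right (hdiag a)
    · by_cases hle : b ≤ a
      · rw [ih b (lt_of_le_of_ne hle hba), zero_mul]
      · rw [htri a b hle, mul_zero]

theorem Submodule.finrank_add_card_le_of_triangular {ι : Type*} [Fintype ι] [PartialOrder ι]
    (φ : ι → V →ₗ[K] K) (v : ι → V) (htri : ∀ a b, ¬ b ≤ a → φ a (v b) = 0)
    (hdiag : ∀ a, φ a (v a) ≠ 0) {U W : Submodule K V} [FiniteDimensional K W] (hUW : U ≤ W)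
    (hU : ∀ a, ∀ x ∈ U, φ a x = 0) (hv : ∀ a, v a ∈ W) :
    finrank K U + Fintype.card ι ≤ finrank K W := by
  have hind : LinearIndependent K v := Fintype.linearIndependent_iff.mpr fun g hg =>
    congrFun (eq_zero_of_forall_apply_sum_smul_eq_zero φ v htri hdiag fun a => by simp [hg])
  have hdisj : U ⊓ span K (Set.range v) = ⊥ := by
    refine (Submodule.eq_bot_iff _).mpr fun x ⟨hxU, hxv⟩ => ?_
    obtain ⟨g, rfl⟩ := Submodule.mem_span_range_iff_exists_fun K |>.mp hxv
    rw [eq_zero_of_forall_apply_sum_smul_eq_zero φ v htri hdiag fun a => hU a _ hxU]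
    simp
  have : FiniteDimensional K U := Submodule.finiteDimensional_of_le hUW
  have : FiniteDimensional K (span K (Set.range v)) :=
    FiniteDimensional.span_of_finite K (Set.finite_range v)
  have := Submodule.finrank_sup_add_finrank_inf_eq U (span K (Set.range v))
  rw [hdisj, finrank_bot, finrank_span_eq_card hind] at this
  have hsup : U ⊔ span K (Set.range v) ≤ W :=
    sup_le hUW (Submodule.span_le.mpr (Set.range_subset_iff.mpr hv))
  have := Submodule.finrank_mono hsup
  omega

end LinearAlgebra

namespace MvPolynomial

variable {σ K : Type*} [Field K]

theorem finrank_homogeneousSubmodule [Fintype σ] (n : ℕ) :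
    Module.finrank K (homogeneousSubmodule σ K n) = (Fintype.card σ + n - 1).choose n := by
  classical
  have hset : {d : σ →₀ ℕ | d.degree = n} = ↑(Finset.univ.finsuppAntidiag n : Finset (σ →₀ ℕ)) := by
    ext d
    simp [Finsupp.degree_eq_sum]
  rw [homogeneousSubmodule_eq_finsupp_supported,
    (AddMonoidAlgebra.supportedEquivFinsupp _).finrank_eq, hset, Module.finrank_finsupp_self]
  simp [Finset.card_finsuppAntidiag_nat_eq_choose]

instance [Finite σ] (n : ℕ) : FiniteDimensional K (homogeneousSubmodule σ K n) :=
  Module.Finite.iff_fg.mpr (homogeneousSubmodule_fg σ K n)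

variable [Fintype σ]

noncomputable def linearForm (c : σ → K) : MvPolynomial σ K := ∑ j, c j • X j

theorem eval_linearForm (c q : σ → K) : eval q (linearForm c) = c ⬝ᵥ q := by
  simp [linearForm, dotProduct, smul_eq_C_mul]

theorem isHomogeneous_linearForm (c : σ → K) : (linearForm c).IsHomogeneous 1 :=
  IsHomogeneous.sum _ _ _ fun j _ => by
    simpa [smul_eq_C_mul] using (isHomogeneous_X K j).C_mul (c j)

noncomputable def directionalDeriv (w : σ → K) :
    Derivation K (MvPolynomial σ K) (MvPolynomial σ K) :=
  ∑ j, w j • pderiv j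

theorem directionalDeriv_apply (w : σ → K) (f : MvPolynomial σ K) :
    directionalDeriv w f = ∑ j, w j • pderiv j f := by
  rw [directionalDeriv, ← Derivation.coeFnAddMonoidHom_apply, map_sum]
  simp [Derivation.coeFnAddMonoidHom_apply]

theorem directionalDeriv_linearForm (w c : σ → K) :
    directionalDeriv w (linearForm c) = C (c ⬝ᵥ w) := by
  classical
  simp [directionalDeriv_apply, linearForm, dotProduct, pderiv_X, Pi.single_apply, smul_eq_C_mul,
    mul_comm]

end MvPolynomial

section PointIdeal

open MvPolynomial

variable {K : Type} [Field K] {N : ℕ} {q : Fin N → K} {f : MvPolynomial (Fin N) K}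

theorem mem_pointIdeal_of_isHomogeneous (hf : f.IsHomogeneous 1) (hq : eval q f = 0) :
    f ∈ pointIdeal q :=
  Ideal.subset_span ⟨hf, hq⟩

theorem linearForm_mem_pointIdeal {c : Fin N → K} (h : c ⬝ᵥ q = 0) :
    linearForm c ∈ pointIdeal q :=
  mem_pointIdeal_of_isHomogeneous (isHomogeneous_linearForm c) (by rw [eval_linearForm, h])

theorem eval_eq_zero_of_mem_pointIdeal (hf : f ∈ pointIdeal q) : eval q f = 0 := by
  have : pointIdeal q ≤ RingHom.ker (eval q) :=
    Ideal.span_le.mpr fun g hg => RingHom.mem_ker.mpr hg.2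
  exact this hf

theorem eval_eq_zero_of_mem_pointIdeal_sq (hf : f ∈ pointIdeal q ^ 2) : eval q f = 0 :=
  eval_eq_zero_of_mem_pointIdeal (Ideal.pow_le_self two_ne_zero hf)

theorem eval_derivation_eq_zero_of_mem_pointIdeal_sq
    (D : Derivation K (MvPolynomial (Fin N) K) (MvPolynomial (Fin N) K))
    (hf : f ∈ pointIdeal q ^ 2) : eval q (D f) = 0 := by
  rw [sq] at hf
  refine Submodule.mul_induction_on hf (fun a ha b hb => ?_) fun x y hx hy => ?_
  · simp [Derivation.leibniz, eval_eq_zero_of_mem_pointIdeal ha, eval_eq_zero_of_mem_pointIdeal hb]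
  · simp [hx, hy]

end PointIdeal

theorem Ideal.prod_mem_sq {R ι : Type*} [CommRing R] [Fintype ι] {I : Ideal R}
    (f : ι → R) {t₁ t₂ : ι} (h : t₁ ≠ t₂) (h₁ : f t₁ ∈ I) (h₂ : f t₂ ∈ I) :
    ∏ t, f t ∈ I ^ 2 := by
  classical
  rw [← Finset.mul_prod_erase _ f (Finset.mem_univ t₁),
    ← Finset.mul_prod_erase _ f (Finset.mem_erase.mpr ⟨h.symm, Finset.mem_univ t₂⟩), ← mul_assoc,
    sq]
  exact Ideal.mul_mem_right _ _ (Ideal.mul_mem_mul h₁ h₂)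

theorem Ideal.prod_mem_sq_or_exists_eq_pow_mul {R ι : Type*} [CommRing R] {I : Ideal R}
    {ℓ : ι → R} {i₀ : ι} (hI : ∀ i ≠ i₀, ℓ i ∈ I) {d : ℕ} (w : Fin (d + 1) → ι) :
    ∏ t, ℓ (w t) ∈ I ^ 2 ∨ ∃ i, ∏ t, ℓ (w t) = ℓ i₀ ^ d * ℓ i := by
  by_cases htwo : ∃ t₁ t₂, t₁ ≠ t₂ ∧ w t₁ ≠ i₀ ∧ w t₂ ≠ i₀
  · obtain ⟨t₁, t₂, hne, h₁, h₂⟩ := htwo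
    exact Or.inl (Ideal.prod_mem_sq _ hne (hI _ h₁) (hI _ h₂))
  · push Not at htwo
    obtain ⟨t₀, ht₀⟩ : ∃ t₀, ∀ t ≠ t₀, w t = i₀ := by
      by_cases h : ∃ t₀, w t₀ ≠ i₀
      · obtain ⟨t₀, ht₀⟩ := h
        exact ⟨t₀, fun t ht => by_contra fun hw => ht₀ (htwo t t₀ ht hw)⟩
      · push Not at h
        exact ⟨0, fun t _ => h t⟩
    refine Or.inr ⟨w t₀, ?_⟩
    rw [← Finset.mul_prod_erase _ _ (Finset.mem_univ t₀),
      Finset.prod_congr rfl fun t ht => congrArg ℓ (ht₀ t (Finset.ne_of_mem_erase ht)),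
      Finset.prod_const, Finset.card_erase_of_mem (Finset.mem_univ t₀), Finset.card_univ,
      Fintype.card_fin, add_tsub_cancel_right, mul_comm]

section DoublePoint

open MvPolynomial Module Pointwise

theorem MvPolynomial.finrank_homogeneousSubmodule_le_finrank_inf_sq_add {σ K ι : Type*} [Field K]
    [Finite σ] [Fintype ι] (ℓ : ι → MvPolynomial σ K)
    (hℓ : Submodule.span K (Set.range ℓ) = homogeneousSubmodule σ K 1) (i₀ : ι)
    {I : Ideal (MvPolynomial σ K)} (hI : ∀ i ≠ i₀, ℓ i ∈ I) (d : ℕ) :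
    finrank K (homogeneousSubmodule σ K (d + 1)) ≤
      finrank K ↥(homogeneousSubmodule σ K (d + 1) ⊓ (I ^ 2).restrictScalars K) +
        Fintype.card ι := by
  set H := homogeneousSubmodule σ K (d + 1)
  set B := Submodule.span K (Set.range fun i => ℓ i₀ ^ d * ℓ i)
  have hH : H = Submodule.span K (Set.range ℓ ^ (d + 1)) := by
    rw [← Submodule.span_pow, hℓ, homogeneousSubmodule_one_pow]
  have hle : H ≤ H ⊓ (I ^ 2).restrictScalars K ⊔ B := by
    conv_lhs => rw [hH]
    refine Submodule.span_le.mpr fun x hx => ?_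
    have hxH : x ∈ H := hH ▸ Submodule.subset_span hx
    obtain ⟨f, rfl⟩ := Set.mem_pow.mp hx
    choose w hw using fun t => (f t).2
    simp only [List.prod_ofFn, ← hw] at hxH ⊢
    rcases Ideal.prod_mem_sq_or_exists_eq_pow_mul hI w with hsq | ⟨i, heq⟩
    · exact Submodule.mem_sup_left ⟨hxH, hsq⟩
    · exact heq ▸ Submodule.mem_sup_right (Submodule.subset_span ⟨i, rfl⟩)
  have : FiniteDimensional K B := FiniteDimensional.span_of_finite K (Set.finite_range _)
  calc finrank K H ≤ finrank K ↥(H ⊓ (I ^ 2).restrictScalars K ⊔ B) := Submodule.finrank_mono hle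
    _ ≤ finrank K ↥(H ⊓ (I ^ 2).restrictScalars K) + finrank K B :=
      Submodule.finrank_add_le_finrank_add_finrank _ _
    _ ≤ _ := by
      gcongr
      exact finrank_range_le_card _

theorem finrank_homogeneousSubmodule_le_finrank_inf_pointIdeal_sq_add {K : Type} [Field K]
    {N : ℕ} {q : Fin N → K} (hq : q ≠ 0) (d : ℕ) :
    finrank K (homogeneousSubmodule (Fin N) K (d + 1)) ≤
      finrank K ↥(homogeneousSubmodule (Fin N) K (d + 1) ⊓ (pointIdeal q ^ 2).restrictScalars K) +
        N := by
  obtain ⟨j₀, hj₀⟩ := Function.ne_iff.mp hq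
  let ℓ : Fin N → MvPolynomial (Fin N) K := fun j =>
    if j = j₀ then X j₀ else q j₀ • X j - q j • X j₀
  have hℓ : Submodule.span K (Set.range ℓ) = homogeneousSubmodule (Fin N) K 1 := by
    have hX : ∀ j, (X j : MvPolynomial (Fin N) K) ∈ homogeneousSubmodule (Fin N) K 1 :=
      isHomogeneous_X K
    refine le_antisymm (Submodule.span_le.mpr ?_) ?_
    · rintro _ ⟨j, rfl⟩
      by_cases hj : j = j₀
      · simp only [ℓ, if_pos hj, SetLike.mem_coe, hX]
      · simp only [ℓ, if_neg hj, SetLike.mem_coe]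
        exact Submodule.sub_mem _ (Submodule.smul_mem _ _ (hX j)) (Submodule.smul_mem _ _ (hX j₀))
    · rw [homogeneousSubmodule_one_eq_span_X, Submodule.span_le]
      rintro _ ⟨j, rfl⟩
      have hj₀ℓ : ℓ j₀ = X j₀ := if_pos rfl
      by_cases hj : j = j₀
      · exact hj ▸ Submodule.subset_span ⟨j₀, hj₀ℓ⟩
      · have : X j = (q j₀)⁻¹ • (ℓ j + q j • ℓ j₀) := by
          simp only [ℓ, if_neg hj, hj₀ℓ, sub_add_cancel, smul_smul, inv_mul_cancel₀ hj₀, one_smul]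
        rw [SetLike.mem_coe, this]
        exact Submodule.smul_mem _ _ (Submodule.add_mem _ (Submodule.subset_span ⟨j, rfl⟩)
          (Submodule.smul_mem _ _ (Submodule.subset_span ⟨j₀, rfl⟩)))
  have hI : ∀ j ≠ j₀, ℓ j ∈ pointIdeal q := fun j hj => by
    refine mem_pointIdeal_of_isHomogeneous ?_ ?_
    · rw [← mem_homogeneousSubmodule, ← hℓ]
      exact Submodule.subset_span ⟨j, rfl⟩
    · simp only [ℓ, if_neg hj, map_sub, smul_eval, eval_X]
      ring
  simpa using finrank_homogeneousSubmodule_le_finrank_inf_sq_add ℓ hℓ j₀ hI d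

theorem finrank_homogeneousSubmodule_le_finrank_inf_fatIdeal_two_add {K : Type} [Field K]
    {N s : ℕ} {p : Fin s → Fin N → K} (hp : ∀ i, p i ≠ 0) (d : ℕ) :
    finrank K (homogeneousSubmodule (Fin N) K (d + 1)) ≤
      finrank K ↥(homogeneousSubmodule (Fin N) K (d + 1) ⊓
        (fatIdeal p fun _ => 2).restrictScalars K) + s * N := by
  have h := Submodule.finrank_le_finrank_inf_biInf_add (homogeneousSubmodule (Fin N) K (d + 1))
    (fun i => (pointIdeal (p i) ^ 2).restrictScalars K) N Finset.univ
    fun i _ => finrank_homogeneousSubmodule_le_finrank_inf_pointIdeal_sq_add (hp i) d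
  have hinf : (fatIdeal p fun _ => 2).restrictScalars K =
      ⨅ i ∈ Finset.univ, (pointIdeal (p i) ^ 2).restrictScalars K := by
    simp [fatIdeal, Submodule.restrictScalars_iInf]
  rw [hinf]
  rwa [Finset.card_univ, Fintype.card_fin] at h

end DoublePoint

section Hyperplanes

open MvPolynomial Module Submodule

variable {K : Type} [Field K] {n s : ℕ}

theorem exists_ne_zero_forall_dotProduct_eq_zero {ι : Type*} [Fintype ι] {N : ℕ}
    (v : ι → Fin N → K) (h : Fintype.card ι < N) : ∃ c ≠ 0, ∀ i, c ⬝ᵥ v i = 0 := by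
  have hker : LinearMap.ker (Matrix.of v).mulVecLin ≠ ⊥ :=
    LinearMap.ker_ne_bot_of_finrank_lt (by simpa using h)
  obtain ⟨c, hc, hc0⟩ := Submodule.exists_mem_ne_zero_of_ne_bot hker
  refine ⟨c, hc0, fun i => ?_⟩
  rw [dotProduct_comm]
  exact congrFun (LinearMap.mem_ker.mp hc) i

theorem eq_zero_of_forall_dotProduct_eq_zero {N : ℕ} {S : Set (Fin N → K)} (hS : span K S = ⊤)
    {c : Fin N → K} (hc : ∀ v ∈ S, c ⬝ᵥ v = 0) : c = 0 := by
  classical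
  funext j
  rw [← dotProduct_single_one c j]
  have hmem : Pi.single j 1 ∈ span K S := hS ▸ mem_top
  refine Submodule.span_induction (p := fun v _ => c ⬝ᵥ v = 0) hc (dotProduct_zero c)
    (fun v w _ _ hv hw => ?_) (fun a v _ hv => ?_) hmem
  · rw [dotProduct_add, hv, hw, add_zero]
  · rw [dotProduct_smul, hv, smul_zero]

/-- If the `v i` are dependent, this is the normal of some hyperplane containing them. -/
noncomputable def hyperplaneNormal (v : Fin n → Fin (n + 1) → K) : Fin (n + 1) → K :=
  (exists_ne_zero_forall_dotProduct_eq_zero v (by simp)).choose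

theorem hyperplaneNormal_ne_zero (v : Fin n → Fin (n + 1) → K) : hyperplaneNormal v ≠ 0 :=
  (exists_ne_zero_forall_dotProduct_eq_zero v (by simp)).choose_spec.1

theorem hyperplaneNormal_dotProduct (v : Fin n → Fin (n + 1) → K) (i : Fin n) :
    hyperplaneNormal v ⬝ᵥ v i = 0 :=
  (exists_ne_zero_forall_dotProduct_eq_zero v (by simp)).choose_spec.2 i

def InLinearGeneralPosition (p : Fin s → Fin (n + 1) → K) : Prop :=
  ∀ T : Finset (Fin s), T.card = n + 1 → span K (p '' T) = ⊤

theorem inLinearGeneralPosition_of_forall_not_onLinearSubspace {j : ℕ}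
    {p : Fin s → Fin (j + 2) → K}
    (h : ∀ T : Finset (Fin s), T.card = j + 2 → ¬ OnLinearSubspace p T j) :
    InLinearGeneralPosition p := by
  intro T hT
  by_contra hne
  refine h T hT ⟨span K (p '' T), ?_, fun i hi => subset_span ⟨i, hi, rfl⟩⟩
  have := Submodule.finrank_lt hne
  rw [finrank_fin_fun] at this
  exact Nat.lt_succ_iff.mp (by convert this)

theorem ProjDistinct.not_onLinearSubspace {N : ℕ} {p : Fin s → Fin N → K} (hp : ProjDistinct p)
    {T : Finset (Fin s)} (hT : T.card = 2) : ¬ OnLinearSubspace p T 0 := by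
  rintro ⟨W, hW, hTW⟩
  obtain ⟨x, y, hxy, rfl⟩ := Finset.card_eq_two.mp hT
  have hline : Submodule.span K {p x} = W :=
    Submodule.eq_of_le_of_finrank_le (Submodule.span_le.mpr (by simpa using hTW x (by simp)))
      (by rwa [finrank_span_singleton (hp.1 x)])
  obtain ⟨c, hc⟩ := Submodule.mem_span_singleton.mp (hline ▸ hTW y (by simp))
  exact hp.2 y x (Ne.symm hxy) c hc.symm

namespace InLinearGeneralPosition

variable {p : Fin s → Fin (n + 1) → K}

theorem comp (hp : InLinearGeneralPosition p) {ρ : Fin s → Fin s} (hρ : ρ.Injective) :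
    InLinearGeneralPosition (p ∘ ρ) := by
  intro T hT
  have := hp (T.map ⟨ρ, hρ⟩) (by rw [Finset.card_map, hT])
  rwa [Finset.coe_map, Function.Embedding.coeFn_mk, ← Set.image_comp] at this

theorem hyperplaneNormal_dotProduct_ne_zero (hp : InLinearGeneralPosition p) {a : Fin n → Fin s}
    (ha : a.Injective) {k : Fin s} (hk : k ∉ Set.range a) :
    hyperplaneNormal (p ∘ a) ⬝ᵥ p k ≠ 0 := by
  classical
  intro hzero
  have hcard : (insert k (Finset.univ.image a)).card = n + 1 := by
    rw [Finset.card_insert_of_notMem (by simpa using hk), Finset.card_image_of_injective _ ha,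
      Finset.card_univ, Fintype.card_fin]
  refine hyperplaneNormal_ne_zero (p ∘ a) (eq_zero_of_forall_dotProduct_eq_zero (hp _ hcard) ?_)
  rintro _ ⟨i, hi, rfl⟩
  rw [Finset.coe_insert, Set.mem_insert_iff] at hi
  rcases hi with rfl | hi
  · exact hzero
  · obtain ⟨r, -, rfl⟩ := Finset.mem_image.mp hi
    exact hyperplaneNormal_dotProduct (p ∘ a) r

end InLinearGeneralPosition

end Hyperplanes

section HyperplaneProduct

open MvPolynomial

variable {K : Type} [Field K] {n s d : ℕ} (p : Fin s → Fin (n + 1) → K)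

noncomputable def hyperplaneProduct (T : Fin d → Fin n → Fin s) : MvPolynomial (Fin (n + 1)) K :=
  ∏ t, linearForm (hyperplaneNormal (p ∘ T t))

theorem isHomogeneous_hyperplaneProduct (T : Fin d → Fin n → Fin s) :
    (hyperplaneProduct p T).IsHomogeneous d := by
  simpa [hyperplaneProduct] using IsHomogeneous.prod Finset.univ _ (fun _ => 1)
    fun t _ => isHomogeneous_linearForm (hyperplaneNormal (p ∘ T t))

theorem eval_hyperplaneProduct (T : Fin d → Fin n → Fin s) (q : Fin (n + 1) → K) :
    eval q (hyperplaneProduct p T) = ∏ t, hyperplaneNormal (p ∘ T t) ⬝ᵥ q := by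
  simp [hyperplaneProduct, eval_linearForm]

theorem hyperplaneNormal_dotProduct_of_mem_range {a : Fin n → Fin s} {k : Fin s}
    (hk : k ∈ Set.range a) : hyperplaneNormal (p ∘ a) ⬝ᵥ p k = 0 := by
  obtain ⟨r, rfl⟩ := hk
  exact hyperplaneNormal_dotProduct (p ∘ a) r

theorem linearForm_hyperplaneNormal_mem_pointIdeal {a : Fin n → Fin s} {k : Fin s}
    (hk : k ∈ Set.range a) : linearForm (hyperplaneNormal (p ∘ a)) ∈ pointIdeal (p k) :=
  linearForm_mem_pointIdeal (hyperplaneNormal_dotProduct_of_mem_range p hk)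

theorem hyperplaneProduct_mem_pointIdeal_sq {T : Fin d → Fin n → Fin s} {k : Fin s}
    {t₁ t₂ : Fin d} (h : t₁ ≠ t₂) (h₁ : k ∈ Set.range (T t₁)) (h₂ : k ∈ Set.range (T t₂)) :
    hyperplaneProduct p T ∈ pointIdeal (p k) ^ 2 :=
  Ideal.prod_mem_sq _ h (linearForm_hyperplaneNormal_mem_pointIdeal p h₁)
    (linearForm_hyperplaneNormal_mem_pointIdeal p h₂)

theorem eval_hyperplaneProduct_eq_zero {T : Fin d → Fin n → Fin s} {k : Fin s} {t : Fin d}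
    (hk : k ∈ Set.range (T t)) : eval (p k) (hyperplaneProduct p T) = 0 := by
  rw [eval_hyperplaneProduct]
  exact Finset.prod_eq_zero (Finset.mem_univ t) (hyperplaneNormal_dotProduct_of_mem_range p hk)

theorem eval_hyperplaneProduct_ne_zero {p : Fin s → Fin (n + 1) → K}
    (hp : InLinearGeneralPosition p) {T : Fin d → Fin n → Fin s} (hT : ∀ t, (T t).Injective)
    {k : Fin s} (hk : ∀ t, k ∉ Set.range (T t)) : eval (p k) (hyperplaneProduct p T) ≠ 0 := by
  rw [eval_hyperplaneProduct]
  exact Finset.prod_ne_zero_iff.mpr fun t _ => hp.hyperplaneNormal_dotProduct_ne_zero (hT t) (hk t)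

theorem eval_directionalDeriv_hyperplaneProduct {T : Fin (d + 1) → Fin n → Fin s} {k : Fin s}
    (hk : k ∈ Set.range (T 0)) (w : Fin (n + 1) → K) :
    eval (p k) (directionalDeriv w (hyperplaneProduct p T)) =
      (hyperplaneNormal (p ∘ T 0) ⬝ᵥ w) * eval (p k) (hyperplaneProduct p fun t => T t.succ) := by
  rw [hyperplaneProduct, Fin.prod_univ_succ, Derivation.leibniz, directionalDeriv_linearForm]
  simp [eval_linearForm, hyperplaneNormal_dotProduct_of_mem_range p hk, hyperplaneProduct,
    mul_comm]

end HyperplaneProduct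

section SixPoints

open MvPolynomial Module Equiv

variable {K : Type} [Field K]

/-- Every label `k ≠ 0` lies on two planes of each row, so each quartic is singular there.
Row `0` avoids the label `0`; in row `m ≠ 0` only the first plane passes through `0`, and it also
passes through the labels in `{1, 2, 3}` other than `m`. -/
def quarticPlanes : Fin 4 → Fin 4 → Fin 3 → Fin 6 :=
  ![![![1, 2, 3], ![1, 4, 5], ![2, 4, 5], ![3, 4, 5]],
    ![![0, 2, 3], ![2, 1, 4], ![3, 1, 5], ![2, 4, 5]],
    ![![0, 1, 3], ![1, 2, 4], ![3, 2, 5], ![1, 4, 5]],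
    ![![0, 1, 2], ![1, 3, 4], ![2, 3, 5], ![1, 4, 5]]]

theorem quarticPlanes_injective : ∀ m t, (quarticPlanes m t).Injective := by decide

theorem quarticPlanes_mem_two_rows : ∀ m, ∀ k ≠ 0, ∃ t₁ t₂, t₁ ≠ t₂ ∧
    k ∈ Set.range (quarticPlanes m t₁) ∧ k ∈ Set.range (quarticPlanes m t₂) := by decide

theorem zero_notMem_range_quarticPlanes_zero : ∀ t, 0 ∉ Set.range (quarticPlanes 0 t) := by
  decide

theorem zero_notMem_range_quarticPlanes_succ :
    ∀ m t, 0 ∉ Set.range (quarticPlanes m (Fin.succ t)) := by decide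

theorem castLE_mem_range_quarticPlanes :
    ∀ l m : Fin 4, l < m → l.castLE (by norm_num) ∈ Set.range (quarticPlanes m 0) := by decide

theorem castLE_notMem_range_quarticPlanes :
    ∀ m : Fin 4, m ≠ 0 → m.castLE (by norm_num) ∉ Set.range (quarticPlanes m 0) := by decide

/-- The quartics attached to `p i`, with the points relabelled so that `p i` gets the label `0`. -/
noncomputable def quartic (p : Fin 6 → Fin 4 → K) (i : Fin 6) (m : Fin 4) :
    MvPolynomial (Fin 4) K :=
  hyperplaneProduct (p ∘ swap 0 i) (quarticPlanes m)

/-- The value at `p i`, and the derivatives at `p i` towards the points labelled `1, 2, 3` in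
`quartic p i`. -/
noncomputable def jetFunctional (p : Fin 6 → Fin 4 → K) (i : Fin 6) (l : Fin 4) :
    MvPolynomial (Fin 4) K →ₗ[K] K :=
  if l = 0 then (aeval (p i)).toLinearMap
  else (aeval (p i)).toLinearMap ∘ₗ
    (directionalDeriv (p (swap 0 i (l.castLE (by norm_num))))).toLinearMap

variable {p : Fin 6 → Fin 4 → K}

theorem jetFunctional_zero (i : Fin 6) (f : MvPolynomial (Fin 4) K) :
    jetFunctional p i 0 f = eval (p i) f := by
  simp [jetFunctional]

theorem jetFunctional_of_ne_zero (i : Fin 6) {l : Fin 4} (hl : l ≠ 0)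
    (f : MvPolynomial (Fin 4) K) :
    jetFunctional p i l f =
      eval (p i) (directionalDeriv (p (swap 0 i (l.castLE (by norm_num)))) f) := by
  simp [jetFunctional, hl]

theorem jetFunctional_eq_zero_of_mem {i : Fin 6} {f : MvPolynomial (Fin 4) K}
    (hf : f ∈ pointIdeal (p i) ^ 2) (l : Fin 4) : jetFunctional p i l f = 0 := by
  by_cases hl : l = 0
  · rw [hl, jetFunctional_zero]
    exact eval_eq_zero_of_mem_pointIdeal_sq hf
  · rw [jetFunctional_of_ne_zero i hl]
    exact eval_derivation_eq_zero_of_mem_pointIdeal_sq _ hf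

theorem quartic_mem_homogeneousSubmodule (i : Fin 6) (m : Fin 4) :
    quartic p i m ∈ homogeneousSubmodule (Fin 4) K 4 :=
  isHomogeneous_hyperplaneProduct _ _

theorem quartic_mem_pointIdeal_sq {i j : Fin 6} (hij : i ≠ j) (m : Fin 4) :
    quartic p j m ∈ pointIdeal (p i) ^ 2 := by
  have hk : swap 0 j i ≠ 0 := by
    rwa [Ne, swap_apply_eq_iff, swap_apply_left]
  obtain ⟨t₁, t₂, hne, h₁, h₂⟩ := quarticPlanes_mem_two_rows m _ hk
  simpa [quartic] using hyperplaneProduct_mem_pointIdeal_sq (p ∘ swap 0 j) hne h₁ h₂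

theorem jetFunctional_quartic_eq_zero (i : Fin 6) {l m : Fin 4} (hlm : l < m) :
    jetFunctional p i l (quartic p i m) = 0 := by
  have h₀ : (0 : Fin 6) ∈ Set.range (quarticPlanes m 0) :=
    castLE_mem_range_quarticPlanes 0 m (lt_of_le_of_lt (Fin.zero_le l) hlm)
  by_cases hl : l = 0
  · rw [hl, jetFunctional_zero]
    simpa [quartic] using eval_hyperplaneProduct_eq_zero (p ∘ swap 0 i) h₀
  · obtain ⟨m, rfl⟩ := Fin.exists_succ_eq.mpr (ne_bot_of_gt hlm)
    rw [jetFunctional_of_ne_zero i hl]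
    have := eval_directionalDeriv_hyperplaneProduct (p ∘ swap 0 i) h₀
      ((p ∘ swap 0 i) (l.castLE (by norm_num)))
    rw [hyperplaneNormal_dotProduct_of_mem_range _ (castLE_mem_range_quarticPlanes l _ hlm),
      zero_mul] at this
    simpa [quartic] using this

theorem jetFunctional_quartic_ne_zero (hp : InLinearGeneralPosition p) (i : Fin 6) (l : Fin 4) :
    jetFunctional p i l (quartic p i l) ≠ 0 := by
  have hpi : InLinearGeneralPosition (p ∘ swap 0 i) := hp.comp (swap 0 i).injective
  by_cases hl : l = 0
  · subst hl
    rw [jetFunctional_zero]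
    simpa [quartic] using eval_hyperplaneProduct_ne_zero hpi (quarticPlanes_injective 0)
      (k := 0) zero_notMem_range_quarticPlanes_zero
  · have h₀ : (0 : Fin 6) ∈ Set.range (quarticPlanes l 0) :=
      castLE_mem_range_quarticPlanes 0 l (Fin.pos_iff_ne_zero.mpr hl)
    have hderiv := eval_directionalDeriv_hyperplaneProduct (p ∘ swap 0 i) h₀
      ((p ∘ swap 0 i) (l.castLE (by norm_num)))
    have hnormal := hpi.hyperplaneNormal_dotProduct_ne_zero (quarticPlanes_injective l 0)
      (castLE_notMem_range_quarticPlanes l hl)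
    have hrest := eval_hyperplaneProduct_ne_zero hpi (fun t => quarticPlanes_injective l t.succ)
      (k := 0) (zero_notMem_range_quarticPlanes_succ l)
    simp only [Function.comp_apply, swap_apply_left] at hderiv hrest
    rw [jetFunctional_of_ne_zero i hl, quartic, hderiv]
    exact mul_ne_zero hnormal hrest

theorem finrank_homogeneousSubmodule_four_inf_fatIdeal_two (hp : InLinearGeneralPosition p)
    (hp₀ : ∀ i, p i ≠ 0) :
    finrank K ↥(homogeneousSubmodule (Fin 4) K 4 ⊓ (fatIdeal p fun _ => 2).restrictScalars K) =
      11 := by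
  have h35 : finrank K (homogeneousSubmodule (Fin 4) K 4) = 35 := by
    rw [finrank_homogeneousSubmodule, Fintype.card_fin]
    decide
  have hlower := finrank_homogeneousSubmodule_le_finrank_inf_fatIdeal_two_add hp₀ 3
  simp only [Nat.reduceAdd] at hlower
  have hupper := Submodule.finrank_add_card_le_of_triangular (ι := Fin 6 × Fin 4)
    (fun a => jetFunctional p a.1 a.2) (fun b => quartic p b.1 b.2) ?_
    (fun a => jetFunctional_quartic_ne_zero hp a.1 a.2)
    (inf_le_left (b := (fatIdeal p fun _ => 2).restrictScalars K)) ?_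
    (fun b => quartic_mem_homogeneousSubmodule b.1 b.2)
  · simp only [Fintype.card_prod, Fintype.card_fin] at hupper
    omega
  · rintro ⟨i, l⟩ ⟨j, m⟩ hle
    by_cases hij : i = j
    · subst hij
      exact jetFunctional_quartic_eq_zero i (not_le.mp fun h => hle ⟨le_rfl, h⟩)
    · exact jetFunctional_eq_zero_of_mem (quartic_mem_pointIdeal_sq hij m) l
  · rintro ⟨i, l⟩ x ⟨-, hx⟩
    exact jetFunctional_eq_zero_of_mem (Ideal.mem_iInf.mp hx i) l

end SixPoints

section Regularity

open MvPolynomial Module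

variable {K : Type} [Field K] {N : ℕ}

theorem hilbFn_le_choose (I : Ideal (MvPolynomial (Fin N) K)) (t : ℕ) :
    hilbFn K I t ≤ (N + t - 1).choose t := by
  rw [hilbFn, finrank_homogeneousSubmodule, Fintype.card_fin]
  exact Nat.sub_le _ _

theorem regIndex_eq_of_hilbFn_eq {I : Ideal (MvPolynomial (Fin N) K)} {e t : ℕ}
    (ht : hilbFn K I t = e) (hlt : ∀ t' < t, hilbFn K I t' ≠ e) : regIndex K I e = t :=
  le_antisymm (Nat.sInf_le ht) (le_csInf ⟨t, ht⟩ fun _ h => not_lt.mp fun hlt' => hlt _ hlt' h)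

end Regularity

theorem stmt16_general {K : Type} [Field K]
    (p : Fin 6 → Fin 4 → K) (hdist : ProjDistinct p)
    (h3 : ∀ T : Finset (Fin 6), T.card = 3 → ¬ OnLinearSubspace p T 1)
    (h4 : ∀ T : Finset (Fin 6), T.card = 4 → ¬ OnLinearSubspace p T 2) :
    (∀ j : ℕ, j < 3 → ∀ T : Finset (Fin 6), T.card = j + 2 → ¬ OnLinearSubspace p T j) ∧
    regFat K p (fun _ => 2) = 4 := by
  refine ⟨fun j hj T hT => ?_, ?_⟩
  · interval_cases j
    · exact hdist.not_onLinearSubspace hT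
    · exact h3 T hT
    · exact h4 T hT
  · have hdim := finrank_homogeneousSubmodule_four_inf_fatIdeal_two
      (inLinearGeneralPosition_of_forall_not_onLinearSubspace h4) hdist.1
    have hmult : fatMult 3 (fun _ : Fin 6 => 2) = 24 := rfl
    rw [regFat, hmult]
    refine regIndex_eq_of_hilbFn_eq ?_ fun t ht => ?_
    · rw [hilbFn, gradedDim, hdim, finrank_homogeneousSubmodule, Fintype.card_fin]
      rfl
    · have hsmall : (4 + t - 1).choose t < 24 := by interval_cases t <;> decide
      exact (hilbFn_le_choose _ t |>.trans_lt hsmall).ne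

/-- Six non-degenerate double points in `ℙ³` with no 3 collinear and no 4 coplanar
are in linearly general position and `reg(Z) = 4`. -/
theorem stmt16 {K : Type} [Field K] [IsAlgClosed K]
    (p : Fin 6 → Fin 4 → K) (hdist : ProjDistinct p)
    (hspan : Submodule.span K (Set.range p) = ⊤)
    (h3 : ∀ T : Finset (Fin 6), T.card = 3 → ¬ OnLinearSubspace p T 1)
    (h4 : ∀ T : Finset (Fin 6), T.card = 4 → ¬ OnLinearSubspace p T 2) :
    (∀ j : ℕ, j < 3 → ∀ T : Finset (Fin 6), T.card = j + 2 → ¬ OnLinearSubspace p T j) ∧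
    regFat K p (fun _ => 2) = 4 :=
  stmt16_general p hdist h3 h4
end
end
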